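/- arXiv:2302.07794 — 3 statements merged into one kernel-verified Lean document; each statement's English description precedes it below -/
import Mathlib

section
/- Let θ ∈ (0,1) be irrational with convergents p_n/q_n, and let R_θ : ℝ/ℤ → ℝ/ℤ be the rotation x ↦ x + θ. For any x ∈ ℝ/ℤ and n ∈ ℕ, the circle ℝ/ℤ is the union of the arcs R_θ^i([x, x + q_n θ]) for 0 ≤ i ≤ q_{n+1} - 1 together with the arcs R_θ^j([x + q_{n+1} θ, x]) for 0 ≤ j ≤ q_n - 1, and all these arcs have pairwise disjoint interiors. -/
/-- Data of the continued fraction expansion `θ = [0; a 1, a 2, ...]` of an irrational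
`θ ∈ (0,1)` (encoded via the Gauss map iterates `t n`), together with the convergents
`p n / q n` produced by the standard recursion
`p n = a n * p (n-1) + p (n-2)`, `q n = a n * q (n-1) + q (n-2)`,
with `p 0 = 0`, `q 0 = 1`, and (`p (-1) = 1`, `q (-1) = 0`, folded into the values at `1`). -/
structure CFData (θ : ℝ) : Type where
  /-- the partial quotients `a 1, a 2, ...` (the value `a 0` is unused) -/
  a : ℕ → ℕ
  /-- the Gauss map iterates: `t 0 = θ`, `t (n+1) = (t n)⁻¹ - a (n+1)` -/
  t : ℕ → ℝ
  t_zero : t 0 = θ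
  t_mem : ∀ n, t n ∈ Set.Ioo (0 : ℝ) 1
  a_floor : ∀ n, (a (n + 1) : ℤ) = ⌊(t n)⁻¹⌋
  t_succ : ∀ n, t (n + 1) = (t n)⁻¹ - (a (n + 1) : ℝ)
  /-- numerators of the convergents -/
  p : ℕ → ℕ
  /-- denominators of the convergents -/
  q : ℕ → ℕ
  p_zero : p 0 = 0
  p_one : p 1 = 1
  q_zero : q 0 = 1
  q_one : q 1 = a 1
  p_rec : ∀ n, p (n + 2) = a (n + 2) * p (n + 1) + p n
  q_rec : ∀ n, q (n + 2) = a (n + 2) * q (n + 1) + q n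

/-- `l n = |p n - q n · θ|`. -/
noncomputable def CFData.l {θ : ℝ} (cf : CFData θ) (n : ℕ) : ℝ :=
  |(cf.p n : ℝ) - (cf.q n : ℝ) * θ|

/-- The closed arc on the circle `ℝ/ℤ` starting at `x` and ending at `x + len`
(travelling in the direction of the sign of `len`); its length is `|len|`. -/
def arcAt (x : AddCircle (1 : ℝ)) (len : ℝ) : Set (AddCircle (1 : ℝ)) :=
  (fun u : ℝ => x + (u : AddCircle (1 : ℝ))) '' Set.uIcc 0 len

/-! The `q (n+1)` long arcs (length `l n`) and `q n` short arcs (length `l (n+1)`) meet only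
at endpoints: an overlap would produce some `kθ` with `-q (n+1) < k < q (n+1)` closer to an
integer than the best approximation property of the convergents allows, which one sees by
writing `k = α q (n+1) + β q n` with integers `α, β` (possible because
`p (n+1) q n - p n q (n+1) = ±1`). Their lengths add up to `q (n+1) l n + q n l (n+1) = 1`,
so the complement of their closed union is an open null set, hence empty. -/

open Set MeasureTheory Function

lemma eq_zero_or_eq_of_abs_le_abs_sub {c u₁ u₂ : ℝ} (hu₁ : u₁ ∈ uIcc 0 c)
    (hu₂ : u₂ ∈ uIcc 0 c) (h : |c| ≤ |u₂ - u₁|) : u₁ = 0 ∨ u₁ = c := by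
  rcases le_total 0 c with hc | hc
  · rw [uIcc_of_le hc] at hu₁ hu₂
    rw [abs_of_nonneg hc] at h
    rcases le_abs'.1 h with h | h
    · right; linarith [hu₁.2, hu₂.1]
    · left; linarith [hu₁.1, hu₂.2]
  · rw [uIcc_of_ge hc] at hu₁ hu₂
    rw [abs_of_nonpos hc] at h
    rcases le_abs'.1 h with h | h
    · left; linarith [hu₁.2, hu₂.1]
    · right; linarith [hu₁.1, hu₂.2]

lemma exists_eq_mul_of_mem_uIcc_mul {s c u : ℝ} (hs : s = 1 ∨ s = -1) (hc : 0 ≤ c)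
    (hu : u ∈ uIcc 0 (s * c)) : ∃ w ∈ Icc 0 c, u = s * w := by
  rcases hs with rfl | rfl
  · rw [one_mul, uIcc_of_le hc] at hu
    exact ⟨u, hu, (one_mul u).symm⟩
  · rw [uIcc_of_ge (by linarith)] at hu
    exact ⟨-u, ⟨by linarith [hu.2], by linarith [hu.1]⟩, by ring⟩

instance AddCircle.nullSingletonClass {T : ℝ} [Fact (0 < T)] :
    NullSingletonClass (volume : Measure (AddCircle T)) :=
  ⟨fun x => by rw [← Metric.closedBall_zero, AddCircle.volume_closedBall]; simp⟩

lemma MeasureTheory.AEDisjoint.disjoint_interior {X : Type*} [TopologicalSpace X]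
    [MeasurableSpace X] {μ : Measure X} [μ.IsOpenPosMeasure] {s t : Set X}
    (h : AEDisjoint μ s t) : Disjoint (interior s) (interior t) := by
  rw [disjoint_iff_inter_eq_empty, ← interior_inter]
  exact Measure.interior_eq_empty_of_null h

theorem union_biUnion_eq_univ_of_aedisjoint {X ι κ : Type*} [TopologicalSpace X]
    [MeasurableSpace X] [OpensMeasurableSpace X] {μ : Measure X} [IsFiniteMeasure μ]
    [μ.IsOpenPosMeasure] [Countable ι] [Countable κ] {s : Finset ι} {t : Finset κ}
    {K : ι → Set X} {L : κ → Set X} (hK : ∀ i ∈ s, IsClosed (K i))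
    (hL : ∀ j ∈ t, IsClosed (L j)) (hKK : (s : Set ι).Pairwise (AEDisjoint μ on K))
    (hLL : (t : Set κ).Pairwise (AEDisjoint μ on L))
    (hKL : ∀ i ∈ s, ∀ j ∈ t, AEDisjoint μ (K i) (L j))
    (hμ : μ univ ≤ ∑ i ∈ s, μ (K i) + ∑ j ∈ t, μ (L j)) :
    (⋃ i ∈ s, K i) ∪ ⋃ j ∈ t, L j = univ := by
  have hKc := isClosed_biUnion_finset hK
  have hLc := isClosed_biUnion_finset hL
  refine ((hKc.union hLc).measure_eq_univ_iff_eq (μ := μ)).1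
    (le_antisymm (measure_mono (subset_univ _)) ?_)
  have hdisj : AEDisjoint μ (⋃ i ∈ s, K i) (⋃ j ∈ t, L j) :=
    AEDisjoint.iUnion_left_iff.2 fun i => AEDisjoint.iUnion_left_iff.2 fun hi =>
      AEDisjoint.iUnion_right_iff.2 fun j => AEDisjoint.iUnion_right_iff.2 fun hj => hKL i hi j hj
  rwa [measure_union₀ hLc.measurableSet.nullMeasurableSet hdisj,
    measure_biUnion_finset₀ hKK fun i hi => (hK i hi).measurableSet.nullMeasurableSet,
    measure_biUnion_finset₀ hLL fun j hj => (hL j hj).measurableSet.nullMeasurableSet]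

lemma isClosed_arcAt (y : AddCircle (1 : ℝ)) (len : ℝ) : IsClosed (arcAt y len) :=
  (isCompact_uIcc.image (by fun_prop)).isClosed

lemma closedBall_subset_arcAt (y : AddCircle (1 : ℝ)) (len : ℝ) :
    Metric.closedBall (y + ↑(len / 2)) (|len| / 2) ⊆ arcAt y len := by
  intro z hz
  obtain ⟨v, hv⟩ : ∃ v : ℝ, (v : AddCircle (1 : ℝ)) = z - y - ↑(len / 2) :=
    QuotientAddGroup.mk_surjective _
  rw [Metric.mem_closedBall, dist_eq_norm, sub_add_eq_sub_sub, ← hv, UnitAddCircle.norm_eq] at hz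
  refine ⟨len / 2 + (v - round v), ?_, ?_⟩
  · rcases le_total 0 len with h | h
    · rw [uIcc_of_le h]
      rw [abs_of_nonneg h] at hz
      constructor <;> linarith [abs_le.1 hz]
    · rw [uIcc_of_ge h]
      rw [abs_of_nonpos h] at hz
      constructor <;> linarith [abs_le.1 hz]
  · have hz' : z = y + ↑(len / 2) + ↑v := by rw [hv]; abel
    simp [hz', add_assoc]

lemma ofReal_abs_le_volume_arcAt (y : AddCircle (1 : ℝ)) {len : ℝ} (h : |len| ≤ 1) :
    ENNReal.ofReal |len| ≤ volume (arcAt y len) := by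
  calc ENNReal.ofReal |len| = volume (Metric.closedBall (y + ↑(len / 2)) (|len| / 2)) := by
        rw [AddCircle.volume_closedBall, mul_div_cancel₀ _ two_ne_zero, min_eq_right h]
    _ ≤ volume (arcAt y len) := measure_mono (closedBall_subset_arcAt y len)

lemma aedisjoint_arcAt_of_meet_at_endpoints (x : AddCircle (1 : ℝ)) {a b len₁ len₂ : ℝ}
    (h : ∀ u₁ ∈ uIcc 0 len₁, ∀ u₂ ∈ uIcc 0 len₂, ∀ m : ℤ,
      a + u₁ - (b + u₂) = m → u₁ = 0 ∨ u₁ = len₁) :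
    AEDisjoint volume (arcAt (x + ↑a) len₁) (arcAt (x + ↑b) len₂) := by
  refine measure_mono_null (t := {x + ↑a, x + ↑a + ↑len₁}) ?_ ((toFinite _).measure_zero _)
  rintro z ⟨⟨u₁, hu₁, rfl⟩, ⟨u₂, hu₂, he⟩⟩
  have hcoe : ((a + u₁ - (b + u₂) : ℝ) : AddCircle (1 : ℝ)) = 0 := by
    rw [AddCircle.coe_sub, AddCircle.coe_add, AddCircle.coe_add, sub_eq_zero]
    simpa [add_assoc] using he.symm
  obtain ⟨m, hm⟩ := (AddCircle.coe_eq_zero_iff 1).1 hcoe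
  rcases h u₁ hu₁ u₂ hu₂ m (by simpa using hm.symm) with rfl | rfl <;> simp

namespace CFData

variable {θ : ℝ} (cf : CFData θ)

lemma one_le_a (n : ℕ) : 1 ≤ cf.a (n + 1) := by
  have h : (1 : ℤ) ≤ ⌊(cf.t n)⁻¹⌋ :=
    Int.le_floor.2 (by exact_mod_cast ((one_lt_inv₀ (cf.t_mem n).1).2 (cf.t_mem n).2).le)
  have := cf.a_floor n
  omega

lemma one_le_q (n : ℕ) : 1 ≤ cf.q n := by
  induction n using Nat.strong_induction_on with
  | _ n ih =>
    match n with
    | 0 => simp [cf.q_zero]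
    | 1 => rw [cf.q_one]; exact cf.one_le_a 0
    | m + 2 => rw [cf.q_rec]; nlinarith [ih m (by omega), cf.one_le_a (m + 1)]

lemma q_le_q_succ (n : ℕ) : cf.q n ≤ cf.q (n + 1) := by
  match n with
  | 0 => rw [cf.q_zero, cf.q_one]; exact cf.one_le_a 0
  | m + 1 => rw [cf.q_rec]; nlinarith [cf.one_le_a (m + 1), cf.one_le_q m]

noncomputable def err (n : ℕ) : ℝ := (cf.q n : ℝ) * θ - (cf.p n : ℝ)

lemma err_succ (n : ℕ) : cf.err (n + 1) = -cf.t (n + 1) * cf.err n := by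
  induction n with
  | zero =>
    have hθ : θ ≠ 0 := by rw [← cf.t_zero]; exact (cf.t_mem 0).1.ne'
    simp only [err, cf.q_one, cf.p_one, cf.q_zero, cf.p_zero, cf.t_succ 0, cf.t_zero]
    field_simp
    ring
  | succ m ih =>
    have ht : cf.t (m + 1) ≠ 0 := (cf.t_mem (m + 1)).1.ne'
    have hrec : cf.err (m + 2) = (cf.a (m + 2) : ℝ) * cf.err (m + 1) + cf.err m := by
      simp only [err, cf.q_rec, cf.p_rec]; push_cast; ring
    have hprev : cf.err m = -cf.err (m + 1) / cf.t (m + 1) := by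
      rw [ih]; field_simp
    rw [hrec, hprev, cf.t_succ (m + 1)]
    field_simp
    ring

lemma l_eq_abs_err (n : ℕ) : cf.l n = |cf.err n| := abs_sub_comm _ _

lemma neg_one_pow_mul_err_pos (n : ℕ) : 0 < (-1 : ℝ) ^ n * cf.err n := by
  induction n with
  | zero => simpa [err, cf.q_zero, cf.p_zero, ← cf.t_zero] using (cf.t_mem 0).1
  | succ m ih =>
    rw [err_succ, pow_succ]
    nlinarith [(cf.t_mem (m + 1)).1]

lemma l_eq_neg_one_pow_mul_err (n : ℕ) : cf.l n = (-1 : ℝ) ^ n * cf.err n := by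
  rw [l, abs_sub_comm, ← abs_of_pos (cf.neg_one_pow_mul_err_pos n), abs_mul, abs_neg_one_pow,
    one_mul]
  rfl

lemma err_eq_neg_one_pow_mul_l (n : ℕ) : cf.err n = (-1 : ℝ) ^ n * cf.l n := by
  rw [l_eq_neg_one_pow_mul_err, ← mul_assoc, ← mul_pow, neg_one_mul, neg_neg, one_pow, one_mul]

lemma l_pos (n : ℕ) : 0 < cf.l n := by
  rw [l_eq_neg_one_pow_mul_err]; exact cf.neg_one_pow_mul_err_pos n

lemma l_succ_lt (n : ℕ) : cf.l (n + 1) < cf.l n := by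
  rw [l_eq_neg_one_pow_mul_err, l_eq_neg_one_pow_mul_err, err_succ, pow_succ]
  nlinarith [cf.neg_one_pow_mul_err_pos n, (cf.t_mem (n + 1)).1, (cf.t_mem (n + 1)).2]

lemma p_succ_mul_q_sub_p_mul_q_succ (n : ℕ) :
    (cf.p (n + 1) : ℤ) * cf.q n - cf.p n * cf.q (n + 1) = (-1) ^ n := by
  induction n with
  | zero => simp [cf.p_zero, cf.p_one, cf.q_zero]
  | succ m ih =>
    rw [cf.p_rec, cf.q_rec, pow_succ]
    push_cast
    linear_combination -ih

lemma q_succ_mul_l_add_q_mul_l_succ (n : ℕ) :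
    (cf.q (n + 1) : ℝ) * cf.l n + cf.q n * cf.l (n + 1) = 1 := by
  have hdet : (cf.p (n + 1) : ℝ) * cf.q n - cf.p n * cf.q (n + 1) = (-1) ^ n := by
    exact_mod_cast cf.p_succ_mul_q_sub_p_mul_q_succ n
  rw [l_eq_neg_one_pow_mul_err, l_eq_neg_one_pow_mul_err, pow_succ]
  simp only [err]
  have hsq : ((-1 : ℝ) ^ n) ^ 2 = 1 := by rw [← pow_mul, mul_comm, pow_mul, neg_one_sq, one_pow]
  linear_combination (-1 : ℝ) ^ n * hdet + hsq

lemma l_le_one (n : ℕ) : cf.l n ≤ 1 := by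
  have hq : (1 : ℝ) ≤ cf.q (n + 1) := by exact_mod_cast cf.one_le_q (n + 1)
  nlinarith [cf.q_succ_mul_l_add_q_mul_l_succ n, cf.l_pos n, cf.l_pos (n + 1),
    (Nat.cast_nonneg (cf.q n) : (0 : ℝ) ≤ cf.q n)]

lemma exists_coeffs (n : ℕ) (k m : ℤ) : ∃ α β : ℤ, k = α * cf.q (n + 1) + β * cf.q n ∧
    (-1 : ℝ) ^ n * (k * θ - m) = β * cf.l n - α * cf.l (n + 1) := by
  have hdet := cf.p_succ_mul_q_sub_p_mul_q_succ n
  have hsq : ((-1 : ℤ) ^ n) ^ 2 = 1 := by rw [← pow_mul, mul_comm, pow_mul, neg_one_sq, one_pow]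
  set α : ℤ := (-1) ^ n * (m * cf.q n - k * cf.p n)
  set β : ℤ := (-1) ^ n * (k * cf.p (n + 1) - m * cf.q (n + 1))
  have hk : k = α * cf.q (n + 1) + β * cf.q n := by
    linear_combination (-k) * hsq - (-1 : ℤ) ^ n * k * hdet
  have hm : m = α * cf.p (n + 1) + β * cf.p n := by
    linear_combination (-m) * hsq - (-1 : ℤ) ^ n * m * hdet
  refine ⟨α, β, hk, ?_⟩
  have hk' : (k : ℝ) = α * cf.q (n + 1) + β * cf.q n := by exact_mod_cast hk
  have hm' : (m : ℝ) = α * cf.p (n + 1) + β * cf.p n := by exact_mod_cast hm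
  rw [l_eq_neg_one_pow_mul_err, l_eq_neg_one_pow_mul_err, pow_succ, hk', hm']
  simp only [err]
  ring

lemma l_le_abs_mul_sub (n : ℕ) {k : ℤ} (m : ℤ) (hk₀ : k ≠ 0) (hk : |k| < cf.q (n + 1)) :
    cf.l n ≤ |k * θ - m| := by
  obtain ⟨α, β, rfl, hv⟩ := cf.exists_coeffs n k m
  rw [← one_mul |_|, ← abs_neg_one_pow n, ← abs_mul, hv]
  have hq := cf.one_le_q n
  have hq' := cf.one_le_q (n + 1)
  have hl := cf.l_pos (n + 1)
  have hll := cf.l_succ_lt n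
  rw [abs_lt] at hk
  rcases lt_trichotomy α 0 with hα | rfl | hα <;> rcases lt_trichotomy β 0 with hβ | rfl | hβ
  · nlinarith
  · nlinarith
  · have hα' : (α : ℝ) ≤ -1 := Int.cast_le_neg_one_of_neg hα
    have hβ' : (1 : ℝ) ≤ β := Int.cast_one_le_of_pos hβ
    exact le_abs.2 (Or.inl (by nlinarith))
  · have hβ' : (1 : ℝ) ≤ |(β : ℝ)| := by exact_mod_cast Int.one_le_abs hβ.ne
    rw [Int.cast_zero, zero_mul, sub_zero, abs_mul, abs_of_pos (cf.l_pos n)]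
    nlinarith [cf.l_pos n]
  · simp at hk₀
  · have hβ' : (1 : ℝ) ≤ |(β : ℝ)| := by exact_mod_cast Int.one_le_abs hβ.ne'
    rw [Int.cast_zero, zero_mul, sub_zero, abs_mul, abs_of_pos (cf.l_pos n)]
    nlinarith [cf.l_pos n]
  · have hα' : (1 : ℝ) ≤ α := Int.cast_one_le_of_pos hα
    have hβ' : (β : ℝ) ≤ -1 := Int.cast_le_neg_one_of_neg hβ
    exact le_abs.2 (Or.inr (by nlinarith))
  · nlinarith
  · nlinarith

lemma l_add_l_succ_le (n : ℕ) {k : ℤ} (m : ℤ) (hk₁ : -(cf.q (n + 1) : ℤ) < k)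
    (hk₂ : k < cf.q n) (hpos : 0 < (-1 : ℝ) ^ n * (k * θ - m)) :
    cf.l n + cf.l (n + 1) ≤ (-1 : ℝ) ^ n * (k * θ - m) := by
  obtain ⟨α, β, rfl, hv⟩ := cf.exists_coeffs n k m
  rw [hv] at hpos ⊢
  have hq := cf.one_le_q n
  have hqq := cf.q_le_q_succ n
  have hl := cf.l_pos n
  have hl' := cf.l_pos (n + 1)
  rcases lt_trichotomy α 0 with hα | rfl | hα <;> rcases lt_trichotomy β 0 with hβ | rfl | hβ
  · nlinarith
  · nlinarith
  · have hα' : (α : ℝ) ≤ -1 := Int.cast_le_neg_one_of_neg hα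
    have hβ' : (1 : ℝ) ≤ β := Int.cast_one_le_of_pos hβ
    nlinarith
  · have hβ' : (β : ℝ) ≤ -1 := Int.cast_le_neg_one_of_neg hβ
    push_cast at hpos
    nlinarith
  · simp at hpos
  · nlinarith
  · have hα' : (1 : ℝ) ≤ α := Int.cast_one_le_of_pos hα
    have hβ' : (β : ℝ) ≤ -1 := Int.cast_le_neg_one_of_neg hβ
    nlinarith
  · nlinarith
  · nlinarith

lemma long_arcs_meet_at_endpoints (n : ℕ) {i₁ i₂ : ℕ} (h₁ : i₁ < cf.q (n + 1))
    (h₂ : i₂ < cf.q (n + 1)) (hne : i₁ ≠ i₂) :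
    ∀ u₁ ∈ uIcc 0 (cf.err n), ∀ u₂ ∈ uIcc 0 (cf.err n), ∀ m : ℤ,
      i₁ * θ + u₁ - (i₂ * θ + u₂) = m → u₁ = 0 ∨ u₁ = cf.err n := by
  intro u₁ hu₁ u₂ hu₂ m hm
  refine eq_zero_or_eq_of_abs_le_abs_sub hu₁ hu₂ ?_
  have hk : (((i₁ : ℤ) - i₂ : ℤ) : ℝ) * θ - m = u₂ - u₁ := by push_cast; linear_combination hm
  have hbest := cf.l_le_abs_mul_sub n m (k := (i₁ : ℤ) - i₂) (by omega) (by rw [abs_lt]; omega)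
  rwa [hk, cf.l_eq_abs_err] at hbest

lemma short_arcs_disjoint (n : ℕ) {j₁ j₂ : ℕ} (h₁ : j₁ < cf.q n) (h₂ : j₂ < cf.q n)
    (hne : j₁ ≠ j₂) :
    ∀ u₁ ∈ uIcc 0 (cf.err (n + 1)), ∀ u₂ ∈ uIcc 0 (cf.err (n + 1)), ∀ m : ℤ,
      j₁ * θ + u₁ - (j₂ * θ + u₂) ≠ m := by
  intro u₁ hu₁ u₂ hu₂ m hm
  have hk : (((j₁ : ℤ) - j₂ : ℤ) : ℝ) * θ - m = u₂ - u₁ := by push_cast; linear_combination hm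
  have hbest := cf.l_le_abs_mul_sub n m (k := (j₁ : ℤ) - j₂) (by omega)
    (by have := cf.q_le_q_succ n; rw [abs_lt]; omega)
  have hshort : |u₂ - u₁| ≤ cf.l (n + 1) := by
    rw [l_eq_abs_err, ← sub_zero (cf.err _)]
    exact abs_sub_le_of_uIcc_subset_uIcc (uIcc_subset_uIcc hu₁ hu₂)
  rw [hk] at hbest
  linarith [cf.l_succ_lt n]

lemma long_short_arcs_meet_at_endpoints (n : ℕ) {i j : ℕ} (hi : i < cf.q (n + 1))
    (hj : j < cf.q n) :
    ∀ u₁ ∈ uIcc 0 (cf.err n), ∀ u₂ ∈ uIcc 0 (cf.err (n + 1)), ∀ m : ℤ,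
      i * θ + u₁ - (j * θ + u₂) = m → u₁ = 0 ∨ u₁ = cf.err n := by
  intro u₁ hu₁ u₂ hu₂ m hm
  rw [err_eq_neg_one_pow_mul_l] at hu₁ hu₂ ⊢
  obtain ⟨w₁, hw₁, rfl⟩ :=
    exists_eq_mul_of_mem_uIcc_mul (neg_one_pow_eq_or ℝ n) (cf.l_pos n).le hu₁
  obtain ⟨w₂, hw₂, rfl⟩ :=
    exists_eq_mul_of_mem_uIcc_mul (neg_one_pow_eq_or ℝ (n + 1)) (cf.l_pos (n + 1)).le hu₂
  have hsq : ((-1 : ℝ) ^ n) ^ 2 = 1 := by rw [← pow_mul, mul_comm, pow_mul, neg_one_sq, one_pow]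
  have hk : (-1 : ℝ) ^ n * ((((j : ℤ) - i : ℤ) : ℝ) * θ - (-m : ℤ)) = w₁ + w₂ := by
    push_cast
    linear_combination (-(-1 : ℝ) ^ n) * hm + (w₁ + w₂) * hsq
  rcases (add_nonneg hw₁.1 hw₂.1).eq_or_lt with hzero | hpos
  · left; rw [show w₁ = 0 by linarith [hw₁.1, hw₂.1], mul_zero]
  · have hfar := cf.l_add_l_succ_le n (-m) (k := (j : ℤ) - i) (by omega) (by omega) (hk ▸ hpos)
    right; rw [show w₁ = cf.l n by linarith [hw₁.2, hw₂.2]]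

lemma ofReal_l_le_volume_arcAt (y : AddCircle (1 : ℝ)) (n : ℕ) :
    ENNReal.ofReal (cf.l n) ≤ volume (arcAt y (cf.err n)) := by
  rw [cf.l_eq_abs_err]
  exact ofReal_abs_le_volume_arcAt y (cf.l_eq_abs_err n ▸ cf.l_le_one n)

end CFData

theorem renormalization_tiling_general (θ : ℝ)
    (cf : CFData θ) (x : AddCircle (1 : ℝ)) (n : ℕ)
    (A B : ℕ → Set (AddCircle (1 : ℝ)))
    (hA : ∀ i, A i =
      arcAt (x + (((i : ℝ) * θ : ℝ) : AddCircle (1 : ℝ))) ((cf.q n : ℝ) * θ - (cf.p n : ℝ)))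
    (hB : ∀ j, B j =
      arcAt (x + (((j : ℝ) * θ : ℝ) : AddCircle (1 : ℝ)))
        ((cf.q (n + 1) : ℝ) * θ - (cf.p (n + 1) : ℝ))) :
    ((⋃ i ∈ Finset.range (cf.q (n + 1)), A i) ∪ ⋃ j ∈ Finset.range (cf.q n), B j) = Set.univ ∧
    (∀ i₁ < cf.q (n + 1), ∀ i₂ < cf.q (n + 1), i₁ ≠ i₂ →
      Disjoint (interior (A i₁)) (interior (A i₂))) ∧
    (∀ j₁ < cf.q n, ∀ j₂ < cf.q n, j₁ ≠ j₂ →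
      Disjoint (interior (B j₁)) (interior (B j₂))) ∧
    (∀ i < cf.q (n + 1), ∀ j < cf.q n, Disjoint (interior (A i)) (interior (B j))) := by
  have hAA : ∀ i₁ < cf.q (n + 1), ∀ i₂ < cf.q (n + 1), i₁ ≠ i₂ →
      AEDisjoint volume (A i₁) (A i₂) := fun i₁ h₁ i₂ h₂ hne => by
    rw [hA, hA]
    exact aedisjoint_arcAt_of_meet_at_endpoints x (cf.long_arcs_meet_at_endpoints n h₁ h₂ hne)
  have hBB : ∀ j₁ < cf.q n, ∀ j₂ < cf.q n, j₁ ≠ j₂ →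
      AEDisjoint volume (B j₁) (B j₂) := fun j₁ h₁ j₂ h₂ hne => by
    rw [hB, hB]
    exact aedisjoint_arcAt_of_meet_at_endpoints x fun u₁ hu₁ u₂ hu₂ m hm =>
      absurd hm (cf.short_arcs_disjoint n h₁ h₂ hne u₁ hu₁ u₂ hu₂ m)
  have hAB : ∀ i < cf.q (n + 1), ∀ j < cf.q n, AEDisjoint volume (A i) (B j) :=
    fun i hi j hj => by
      rw [hA, hB]
      exact aedisjoint_arcAt_of_meet_at_endpoints x (cf.long_short_arcs_meet_at_endpoints n hi hj)
  refine ⟨?_, fun i₁ h₁ i₂ h₂ hne => (hAA i₁ h₁ i₂ h₂ hne).disjoint_interior,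
    fun j₁ h₁ j₂ h₂ hne => (hBB j₁ h₁ j₂ h₂ hne).disjoint_interior,
    fun i hi j hj => (hAB i hi j hj).disjoint_interior⟩
  refine union_biUnion_eq_univ_of_aedisjoint (fun i _ => hA i ▸ isClosed_arcAt _ _)
    (fun j _ => hB j ▸ isClosed_arcAt _ _)
    (fun i₁ h₁ i₂ h₂ => hAA i₁ (Finset.mem_range.1 h₁) i₂ (Finset.mem_range.1 h₂))
    (fun j₁ h₁ j₂ h₂ => hBB j₁ (Finset.mem_range.1 h₁) j₂ (Finset.mem_range.1 h₂))
    (fun i hi j hj => hAB i (Finset.mem_range.1 hi) j (Finset.mem_range.1 hj)) ?_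
  calc volume univ
      = (Finset.range (cf.q (n + 1))).card • ENNReal.ofReal (cf.l n) +
          (Finset.range (cf.q n)).card • ENNReal.ofReal (cf.l (n + 1)) := by
        rw [AddCircle.measure_univ, ← cf.q_succ_mul_l_add_q_mul_l_succ n,
          ENNReal.ofReal_add (by positivity [cf.l_pos n]) (by positivity [cf.l_pos (n + 1)]),
          ENNReal.ofReal_mul (by positivity), ENNReal.ofReal_mul (by positivity)]
        simp
    _ ≤ _ := add_le_add
        (Finset.card_nsmul_le_sum _ _ _ fun i _ => hA i ▸ cf.ofReal_l_le_volume_arcAt _ n)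
        (Finset.card_nsmul_le_sum _ _ _ fun j _ => hB j ▸ cf.ofReal_l_le_volume_arcAt _ (n + 1))

/-- **The `n`-th renormalization tiling.** For irrational `θ ∈ (0,1)`, any `x ∈ ℝ/ℤ` and any
`n`, the circle is the union of the arcs `R_θ^i([x, x + q n θ])` for `0 ≤ i < q (n+1)` together
with the arcs `R_θ^j([x + q (n+1) θ, x])` for `0 ≤ j < q n`, and all these arcs have pairwise
disjoint interiors. -/
theorem renormalization_tiling (θ : ℝ) (hθ : Irrational θ) (hmem : θ ∈ Set.Ioo (0 : ℝ) 1)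
    (cf : CFData θ) (x : AddCircle (1 : ℝ)) (n : ℕ)
    (A B : ℕ → Set (AddCircle (1 : ℝ)))
    (hA : ∀ i, A i =
      arcAt (x + (((i : ℝ) * θ : ℝ) : AddCircle (1 : ℝ))) ((cf.q n : ℝ) * θ - (cf.p n : ℝ)))
    (hB : ∀ j, B j =
      arcAt (x + (((j : ℝ) * θ : ℝ) : AddCircle (1 : ℝ)))
        ((cf.q (n + 1) : ℝ) * θ - (cf.p (n + 1) : ℝ))) :
    ((⋃ i ∈ Finset.range (cf.q (n + 1)), A i) ∪ ⋃ j ∈ Finset.range (cf.q n), B j) = Set.univ ∧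
    (∀ i₁ < cf.q (n + 1), ∀ i₂ < cf.q (n + 1), i₁ ≠ i₂ →
      Disjoint (interior (A i₁)) (interior (A i₂))) ∧
    (∀ j₁ < cf.q n, ∀ j₂ < cf.q n, j₁ ≠ j₂ →
      Disjoint (interior (B j₁)) (interior (B j₂))) ∧
    (∀ i < cf.q (n + 1), ∀ j < cf.q n, Disjoint (interior (A i)) (interior (B j))) :=
  renormalization_tiling_general θ cf x n A B hA hB
end

section
/- Let d_0, d_∞ ≥ 2, d = d_0 + d_∞ - 1, c ∈ ℂ*, and define F_c(z) := -c · (Σ_{j=d_0}^{d} C(d,j)(-z)^j) / (Σ_{j=0}^{d_0-1} C(d,j)(-z)^j). Then F_c(0) = 0 with a zero of order d_0 at 0, F_c(1) = c, and 1 - (1/c)·F_c(-z) = (z+1)^d / (Σ_{j=0}^{d_0-1} C(d,j) z^j), so that z = 1 is a critical point of F_c of local degree d. -/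
/-!
Write `d = d₀ + d_∞ - 1` and split the binomial expansion of `(z + 1)^d` into the head
`P z = Σ_{j<d₀} C(d,j) z^j` and the tail `Q z = Σ_{j≥d₀} C(d,j) z^j`, so that
`F_c(z) = -c Q(-z) / P(-z)`. Since `P + Q = (z + 1)^d`, we get
`1 - c⁻¹ F_c(-z) = (P z + Q z) / P z = (z + 1)^d / P z`; read at `-z` this says
`F_c(z) - c = -c (1 - z)^d / P(-z)`, a zero of order `d` at `z = 1` because
`P(-1) = ± C(d-1, d₀-1) ≠ 0`. At `0`, the tail `Q` is divisible by `z^{d₀}` with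
quotient `C(d,d₀) ≠ 0` at `0`, while `P 0 = 1`.
-/

open Filter

/-- The unicritical map
`F_c(z) = -c · (Σ_{j=d₀}^{d} C(d,j)(-z)^j) / (Σ_{j=0}^{d₀-1} C(d,j)(-z)^j)`,
where `d = d₀ + dinf - 1`. -/
noncomputable def Fc (d₀ dinf : ℕ) (c : ℂ) (z : ℂ) : ℂ :=
  -c * (∑ j ∈ Finset.Icc d₀ (d₀ + dinf - 1), ((d₀ + dinf - 1).choose j : ℂ) * (-z) ^ j) /
    (∑ j ∈ Finset.range d₀, ((d₀ + dinf - 1).choose j : ℂ) * (-z) ^ j)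

open Finset

section BinomialSplitting

variable {R : Type*} [CommSemiring R]

def binomHead (d n : ℕ) (z : R) : R := ∑ j ∈ range n, (d.choose j : R) * z ^ j

def binomTail (d n : ℕ) (z : R) : R := ∑ j ∈ Icc n d, (d.choose j : R) * z ^ j

def binomTailQuot (d n : ℕ) (z : R) : R :=
  ∑ k ∈ range (d + 1 - n), (d.choose (n + k) : R) * z ^ k

theorem binomHead_add_binomTail {d n : ℕ} (h : n ≤ d + 1) (z : R) :
    binomHead d n z + binomTail d n z = (z + 1) ^ d := by
  rw [binomHead, binomTail, ← Ico_add_one_right_eq_Icc, sum_range_add_sum_Ico _ h, add_pow]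
  exact sum_congr rfl fun j _ => by ring

theorem binomTail_eq_pow_mul_binomTailQuot (d n : ℕ) (z : R) :
    binomTail d n z = z ^ n * binomTailQuot d n z := by
  rw [binomTail, binomTailQuot, ← Ico_add_one_right_eq_Icc, sum_Ico_eq_sum_range, mul_sum]
  exact sum_congr rfl fun k _ => by ring

theorem binomHead_zero {d n : ℕ} (hn : n ≠ 0) : binomHead d n (0 : R) = 1 := by
  obtain ⟨k, rfl⟩ := Nat.exists_eq_succ_of_ne_zero hn
  simp [binomHead, sum_range_succ']

theorem binomTailQuot_zero {d n : ℕ} (h : n ≤ d) : binomTailQuot d n (0 : R) = d.choose n := by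
  obtain ⟨k, hk⟩ : ∃ k, d + 1 - n = k + 1 := ⟨d - n, by omega⟩
  simp [binomTailQuot, hk, sum_range_succ']

theorem binomHead_neg_one {R : Type*} [CommRing R] (m k : ℕ) :
    binomHead (m + 1) (k + 1) (-1 : R) = (-1) ^ k * m.choose k := by
  have h := congrArg (Int.cast : ℤ → R)
    (Int.alternating_sum_range_choose_eq_choose (n := m) (m := k))
  push_cast at h
  rw [binomHead, ← h]
  exact sum_congr rfl fun j _ => mul_comm _ _

theorem binomHead_neg_one_ne_zero {R : Type*} [CommRing R] [CharZero R] {d n : ℕ}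
    (hn : n ≠ 0) (h : n ≤ d) :
    binomHead d n (-1 : R) ≠ 0 := by
  obtain ⟨m, rfl⟩ := Nat.exists_eq_succ_of_ne_zero (show d ≠ 0 by omega)
  obtain ⟨k, rfl⟩ := Nat.exists_eq_succ_of_ne_zero hn
  rw [binomHead_neg_one, Ne, (isUnit_neg_one.pow k).mul_right_eq_zero]
  exact_mod_cast (Nat.choose_pos (by omega)).ne'

end BinomialSplitting

section Analytic

variable {𝕜 : Type*} [NontriviallyNormedField 𝕜]

@[fun_prop]
theorem analyticAt_binomHead (d n : ℕ) (x : 𝕜) : AnalyticAt 𝕜 (binomHead d n) x := by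
  unfold binomHead; fun_prop

@[fun_prop]
theorem analyticAt_binomTailQuot (d n : ℕ) (x : 𝕜) :
    AnalyticAt 𝕜 (binomTailQuot d n) x := by
  unfold binomTailQuot; fun_prop

end Analytic

theorem Fc_eq (d₀ dinf : ℕ) (c z : ℂ) :
    Fc d₀ dinf c z =
      -c * binomTail (d₀ + dinf - 1) d₀ (-z) / binomHead (d₀ + dinf - 1) d₀ (-z) := rfl

theorem Fc_eq_pow_mul (d₀ dinf : ℕ) (c z : ℂ) :
    Fc d₀ dinf c z = z ^ d₀ *
      (-c * (-1) ^ d₀ * binomTailQuot (d₀ + dinf - 1) d₀ (-z) /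
        binomHead (d₀ + dinf - 1) d₀ (-z)) := by
  rw [Fc_eq, binomTail_eq_pow_mul_binomTailQuot, neg_pow z]
  ring

theorem one_sub_inv_mul_Fc_neg {d₀ dinf : ℕ} {c z : ℂ} (hc : c ≠ 0)
    (hz : binomHead (d₀ + dinf - 1) d₀ z ≠ 0) :
    1 - c⁻¹ * Fc d₀ dinf c (-z) =
      (z + 1) ^ (d₀ + dinf - 1) / binomHead (d₀ + dinf - 1) d₀ z := by
  rw [Fc_eq, neg_neg, ← binomHead_add_binomTail (n := d₀) (by omega)]
  field_simp
  ring

theorem Fc_sub_eq_pow_mul {d₀ dinf : ℕ} {c z : ℂ} (hc : c ≠ 0)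
    (hz : binomHead (d₀ + dinf - 1) d₀ (-z) ≠ 0) :
    Fc d₀ dinf c z - c = (z - 1) ^ (d₀ + dinf - 1) *
      (-c * (-1) ^ (d₀ + dinf - 1) / binomHead (d₀ + dinf - 1) d₀ (-z)) := by
  have h := one_sub_inv_mul_Fc_neg (dinf := dinf) hc hz
  rw [neg_neg, show -z + 1 = -1 * (z - 1) by ring, mul_pow, eq_div_iff hz] at h
  rw [mul_div_assoc', eq_div_iff hz]
  linear_combination (-c) * h -
    Fc d₀ dinf c z * binomHead (d₀ + dinf - 1) d₀ (-z) * mul_inv_cancel₀ hc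

/-- **Properties of the unicritical map `F_c`.** For `d₀, dinf ≥ 2`, `d = d₀ + dinf - 1`
and `c ≠ 0`: `F_c(0) = 0` with a zero of order `d₀` at `0`, `F_c(1) = c`,
`1 - c⁻¹ F_c(-z) = (z+1)^d / (Σ_{j<d₀} C(d,j) z^j)` wherever the denominator is nonzero,
and `z = 1` is a critical point of `F_c` of local degree `d`
(`F_c(z) - c` vanishes to order exactly `d` at `z = 1`). -/
theorem Fc_properties (d₀ dinf : ℕ) (h₀ : 2 ≤ d₀) (hinf : 2 ≤ dinf)
    (c : ℂ) (hc : c ≠ 0) (d : ℕ) (hd : d = d₀ + dinf - 1) :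
    Fc d₀ dinf c 0 = 0 ∧
    (∃ g : ℂ → ℂ, AnalyticAt ℂ g 0 ∧ g 0 ≠ 0 ∧
      ∀ᶠ z in nhds (0 : ℂ), Fc d₀ dinf c z = z ^ d₀ * g z) ∧
    Fc d₀ dinf c 1 = c ∧
    (∀ z : ℂ, (∑ j ∈ Finset.range d₀, (d.choose j : ℂ) * z ^ j) ≠ 0 →
      1 - c⁻¹ * Fc d₀ dinf c (-z) =
        (z + 1) ^ d / (∑ j ∈ Finset.range d₀, (d.choose j : ℂ) * z ^ j)) ∧
    (∃ h : ℂ → ℂ, AnalyticAt ℂ h 1 ∧ h 1 ≠ 0 ∧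
      ∀ᶠ z in nhds (1 : ℂ), Fc d₀ dinf c z - c = (z - 1) ^ d * h z) := by
  subst hd
  have hP0 : binomHead (d₀ + dinf - 1) d₀ (-0 : ℂ) ≠ 0 := by
    rw [neg_zero, binomHead_zero (by omega)]; exact one_ne_zero
  have hP1 : binomHead (d₀ + dinf - 1) d₀ (-1 : ℂ) ≠ 0 :=
    binomHead_neg_one_ne_zero (by omega) (by omega)
  have hQ0 : binomTailQuot (d₀ + dinf - 1) d₀ (-0 : ℂ) ≠ 0 := by
    rw [neg_zero, binomTailQuot_zero (by omega)]; exact_mod_cast (Nat.choose_pos (by omega)).ne'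
  have hP1_near : ∀ᶠ z in nhds (1 : ℂ), binomHead (d₀ + dinf - 1) d₀ (-z) ≠ 0 :=
    (show ContinuousAt (fun z : ℂ => binomHead (d₀ + dinf - 1) d₀ (-z)) 1 by
      fun_prop).eventually_ne hP1
  refine ⟨?_, ⟨_, by fun_prop (disch := exact hP0), ?_, .of_forall (Fc_eq_pow_mul d₀ dinf c)⟩,
    ?_, fun z hz => one_sub_inv_mul_Fc_neg hc hz,
    ⟨_, by fun_prop (disch := exact hP1), ?_, hP1_near.mono fun z hz => Fc_sub_eq_pow_mul hc hz⟩⟩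
  · simp [Fc_eq_pow_mul, zero_pow (show d₀ ≠ 0 by omega)]
  · exact div_ne_zero (mul_ne_zero (mul_ne_zero (neg_ne_zero.mpr hc) (by simp)) hQ0) hP0
  · have h := Fc_sub_eq_pow_mul (dinf := dinf) hc hP1
    rwa [sub_self, zero_pow (by omega), zero_mul, sub_eq_zero] at h
  · exact div_ne_zero (mul_ne_zero (neg_ne_zero.mpr hc) (by simp)) hP1
end

section
/- Non-Crossing Principle: if P_1 and P_2 are conformal rectangles on a Riemann surface, each of extremal width (modulus of its vertical curve family) strictly greater than 1, then P_1 and P_2 do not cross: there exist vertical leaves γ_1 of P_1 and γ_2 of P_2 that are disjoint. -/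
/-!
Suppose every vertical leaf of `P₁` meets every vertical leaf of `P₂`. Pull the Euclidean metric
of `P₁`'s coordinate rectangle back to `P₂`'s through `φ₁⁻¹ ∘ φ₂`, giving the density
`ρ = |(φ₁⁻¹ ∘ φ₂)'|`. A vertical leaf of `P₂` meets every leaf of `P₁`, so its `ρ`-length is at
least `m₁`; by Cauchy–Schwarz and Fubini, `m₂ m₁² ≤ ∫ ρ²`, while `∫ ρ²` is the area of a subset of
`P₁`'s rectangle, at most `m₁`. Hence crossing forces `m₁ m₂ ≤ 1`.
-/

/-- A conformal rectangle on (a domain in) `ℂ`: a continuous map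
`φ : [0,m] × [0,1] → ℂ` restricting to a conformal embedding of the interior.
Its extremal width (the modulus of its vertical curve family) equals `m`. -/
structure ConformalRectangle where
  /-- the width of the rectangle -/
  m : ℝ
  m_pos : 0 < m
  /-- the uniformizing map -/
  φ : ℂ → ℂ
  continuousOn : ContinuousOn φ {z : ℂ | z.re ∈ Set.Icc 0 m ∧ z.im ∈ Set.Icc 0 1}
  holo : DifferentiableOn ℂ φ {z : ℂ | z.re ∈ Set.Ioo 0 m ∧ z.im ∈ Set.Ioo 0 1}
  injOn : Set.InjOn φ {z : ℂ | z.re ∈ Set.Ioo 0 m ∧ z.im ∈ Set.Ioo 0 1}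

/-- The vertical leaf of a conformal rectangle at horizontal coordinate `t`. -/
def ConformalRectangle.leaf (P : ConformalRectangle) (t : ℝ) : Set ℂ :=
  P.φ '' {z : ℂ | z.re = t ∧ z.im ∈ Set.Ioo (0 : ℝ) 1}

open MeasureTheory Set Complex
open scoped ENNReal Topology

theorem volume_reProdIm (s t : Set ℝ) : volume (s ×ℂ t) = volume s * volume t := by
  rw [show s ×ℂ t = measurableEquivRealProd ⁻¹' (s ×ˢ t) from rfl,
    volume_preserving_equiv_real_prod.measure_preimage_equiv, Measure.volume_eq_prod,
    Measure.prod_prod]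

theorem lintegral_lintegral_ofReal_add_mul_I {F : ℂ → ℝ≥0∞} (hF : Measurable F) :
    ∫⁻ x : ℝ, ∫⁻ y : ℝ, F (x + y * I) = ∫⁻ z, F z := by
  calc ∫⁻ x : ℝ, ∫⁻ y : ℝ, F (x + y * I)
      = ∫⁻ x : ℝ, ∫⁻ y : ℝ, F (measurableEquivRealProd.symm (x, y) : ℂ) := by
        simp only [measurableEquivRealProd_symm_apply, mk_eq_add_mul_I]
    _ = ∫⁻ p : ℝ × ℝ, F (measurableEquivRealProd.symm p) := by
        rw [Measure.volume_eq_prod]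
        exact (lintegral_prod _
          (hF.comp measurableEquivRealProd.symm.measurable).aemeasurable).symm
    _ = ∫⁻ z, F z :=
        volume_preserving_equiv_real_prod.symm.lintegral_comp_emb
          measurableEquivRealProd.symm.measurableEmbedding F

theorem lintegral_sq_le_measure_univ_mul {α : Type*} [MeasurableSpace α] (μ : Measure α)
    {f : α → ℝ≥0∞} (hf : AEMeasurable f μ) :
    (∫⁻ a, f a ∂μ) ^ 2 ≤ μ univ * ∫⁻ a, f a ^ 2 ∂μ := by
  have hsqrt (x : ℝ≥0∞) : (x ^ (1 / 2 : ℝ)) ^ 2 = x := by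
    rw [← ENNReal.rpow_natCast, ← ENNReal.rpow_mul]; norm_num
  have hCS := ENNReal.lintegral_mul_le_Lp_mul_Lq μ Real.HolderConjugate.two_two hf
    (aemeasurable_const (b := (1 : ℝ≥0∞)))
  simp only [Pi.mul_apply, mul_one, ENNReal.rpow_two, one_pow, one_mul, lintegral_const] at hCS
  calc (∫⁻ a, f a ∂μ) ^ 2 ≤ ((∫⁻ a, f a ^ 2 ∂μ) ^ (1 / 2 : ℝ) * μ univ ^ (1 / 2 : ℝ)) ^ 2 := by
        gcongr
    _ = μ univ * ∫⁻ a, f a ^ 2 ∂μ := by rw [mul_pow, hsqrt, hsqrt, mul_comm]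

theorem ContinuousLinearMap.det_restrictScalars_toSpanSingleton (c : ℂ) :
    ((toSpanSingleton ℂ c).restrictScalars ℝ).det = normSq c := by
  simp [ContinuousLinearMap.det, LinearMap.det_restrictScalars, Algebra.norm_complex_apply]

theorem lintegral_enorm_deriv_sq_eq_volume_image {f f' : ℂ → ℂ} {s : Set ℂ}
    (hs : MeasurableSet s) (hf : ∀ z ∈ s, HasDerivWithinAt f (f' z) s z) (hinj : InjOn f s) :
    ∫⁻ z in s, ‖f' z‖ₑ ^ 2 = volume (f '' s) := by
  have hf' (z) (hz : z ∈ s) : HasFDerivWithinAt f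
      ((ContinuousLinearMap.toSpanSingleton ℂ (f' z)).restrictScalars ℝ) s z :=
    ((hf z hz).hasFDerivWithinAt).restrictScalars ℝ
  rw [← setLIntegral_one, lintegral_image_eq_lintegral_abs_det_fderiv_mul volume hs hf' hinj]
  refine setLIntegral_congr_fun hs fun z _ => ?_
  rw [ContinuousLinearMap.det_restrictScalars_toSpanSingleton, mul_one,
    abs_of_nonneg (normSq_nonneg _), normSq_eq_norm_sq, ENNReal.ofReal_pow (norm_nonneg _),
    ofReal_norm]

theorem volume_re_image_le_lintegral_enorm {f f' : ℝ → ℂ} {s : Set ℝ} (hs : MeasurableSet s)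
    (hf : ∀ x ∈ s, HasDerivWithinAt f (f' x) s x) :
    volume ((fun x => (f x).re) '' s) ≤ ∫⁻ x in s, ‖f' x‖ₑ := by
  have hre (x) (hx : x ∈ s) : HasDerivWithinAt (fun x => (f x).re) (f' x).re s x :=
    reCLM.hasFDerivAt.comp_hasDerivWithinAt x (hf x hx)
  calc volume ((fun x => (f x).re) '' s) ≤ ∫⁻ x in s, ‖(f' x).re‖ₑ := by
        simpa [ContinuousLinearMap.det_toSpanSingleton, Real.enorm_eq_ofReal_abs] using
          addHaar_image_le_lintegral_abs_det_fderiv volume hs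
            fun x hx => (hre x hx).hasFDerivWithinAt
    _ ≤ ∫⁻ x in s, ‖f' x‖ₑ := by
        gcongr with x
        rw [Real.enorm_eq_ofReal_abs, ← ofReal_norm]
        exact ENNReal.ofReal_le_ofReal (abs_re_le_norm _)

theorem ofReal_mul_sq_le_lintegral_sq {F : ℂ → ℝ≥0∞} (hF : Measurable F) {a : ℝ≥0∞} {b : ℝ}
    (h : ∀ x ∈ Ioo 0 b, a ≤ ∫⁻ y in Ioo (0 : ℝ) 1, F (x + y * I)) :
    ENNReal.ofReal b * a ^ 2 ≤ ∫⁻ z, F z ^ 2 := by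
  have hline (x : ℝ) : Measurable fun y : ℝ => F (x + y * I) := by fun_prop
  calc ENNReal.ofReal b * a ^ 2 = ∫⁻ _ in Ioo (0 : ℝ) b, a ^ 2 := by
        rw [setLIntegral_const, Real.volume_Ioo, sub_zero, mul_comm]
    _ ≤ ∫⁻ x in Ioo (0 : ℝ) b, ∫⁻ y in Ioo (0 : ℝ) 1, F (x + y * I) ^ 2 := by
        refine setLIntegral_mono' measurableSet_Ioo fun x hx => ?_
        calc a ^ 2 ≤ (∫⁻ y in Ioo (0 : ℝ) 1, F (x + y * I)) ^ 2 := by gcongr; exact h x hx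
          _ ≤ ∫⁻ y in Ioo (0 : ℝ) 1, F (x + y * I) ^ 2 := by
            simpa using lintegral_sq_le_measure_univ_mul (volume.restrict (Ioo (0 : ℝ) 1))
              (hline x).aemeasurable
    _ ≤ ∫⁻ x : ℝ, ∫⁻ y : ℝ, F (x + y * I) ^ 2 :=
        (setLIntegral_le_lintegral _ _).trans
          (lintegral_mono fun _ => setLIntegral_le_lintegral _ _)
    _ = ∫⁻ z, F z ^ 2 := lintegral_lintegral_ofReal_add_mul_I (hF.pow_const 2)

namespace ConformalRectangle

variable (P : ConformalRectangle)

def box : Set ℂ := Ioo 0 P.m ×ℂ Ioo 0 1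

theorem isOpen_box : IsOpen P.box := isOpen_Ioo.reProdIm isOpen_Ioo

theorem isPreconnected_box : IsPreconnected P.box :=
  (((convex_Ioo 0 P.m).linear_preimage reLm).inter
    ((convex_Ioo 0 1).linear_preimage imLm)).isPreconnected

theorem volume_box : volume P.box = ENNReal.ofReal P.m := by
  simp [box, volume_reProdIm, Real.volume_Ioo]

theorem analyticOnNhd : AnalyticOnNhd ℂ P.φ P.box := P.holo.analyticOnNhd P.isOpen_box

theorem not_eqOn_deriv_zero : ¬ EqOn (deriv P.φ) 0 P.box := by
  intro h
  have hmem (y : ℝ) (hy : y ∈ Ioo 0 1) : (⟨P.m / 2, y⟩ : ℂ) ∈ P.box :=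
    ⟨⟨half_pos P.m_pos, half_lt_self P.m_pos⟩, hy⟩
  have hthird : (1 / 3 : ℝ) ∈ Ioo 0 1 := by norm_num
  have hhalf : (1 / 2 : ℝ) ∈ Ioo 0 1 := by norm_num
  have := P.injOn (hmem _ hthird) (hmem _ hhalf)
    (P.isOpen_box.is_const_of_deriv_eq_zero P.isPreconnected_box P.holo h
      (hmem _ hthird) (hmem _ hhalf))
  norm_num [Complex.ext_iff] at this

def criticalPoints : Set ℂ := {z | deriv P.φ z = 0} ∩ P.box

theorem countable_criticalPoints : P.criticalPoints.Countable := by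
  obtain h | h := P.analyticOnNhd.deriv.eqOn_zero_or_eventually_ne_zero_of_preconnected
    P.isPreconnected_box
  · exact absurd h P.not_eqOn_deriv_zero
  · exact (HereditarilyLindelofSpace.isLindelof _).countable_of_isDiscrete
      (isDiscrete_of_codiscreteWithin h)

/- Injective holomorphic maps have no critical points at all; countability of the critical set is
all the argument needs, and it is much cheaper to prove. -/
def regularPoints : Set ℂ := P.box ∩ {z | deriv P.φ z ≠ 0}

theorem isOpen_image_regularPoints : IsOpen (P.φ '' P.regularPoints) := by
  have hopen : IsOpen P.regularPoints :=
    P.analyticOnNhd.deriv.continuousOn.isOpen_inter_preimage P.isOpen_box isOpen_ne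
  obtain ⟨w, hw⟩ | h := P.analyticOnNhd.is_constant_or_isOpen P.isPreconnected_box
  · refine absurd (fun z hz => ?_) P.not_eqOn_deriv_zero
    have hconst : P.φ =ᶠ[𝓝 z] fun _ => w :=
      Filter.eventually_of_mem (P.isOpen_box.mem_nhds hz) hw
    exact hconst.deriv_eq.trans (deriv_const _ _)
  · exact h _ inter_subset_left hopen

noncomputable def inv : ℂ → ℂ := Function.invFunOn P.φ P.box

theorem inv_φ {z : ℂ} (hz : z ∈ P.box) : P.inv (P.φ z) = z := P.injOn.leftInvOn_invFunOn hz

theorem hasStrictDerivAt_inv {z : ℂ} (hz : z ∈ P.regularPoints) :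
    HasStrictDerivAt P.inv (deriv P.φ z)⁻¹ (P.φ z) :=
  (P.analyticOnNhd z hz.1).hasStrictDerivAt.to_local_left_inverse hz.2
    (Filter.eventually_of_mem (P.isOpen_box.mem_nhds hz.1) fun _ => P.inv_φ)

variable (P₁ P₂ : ConformalRectangle)

noncomputable def transfer (z : ℂ) : ℂ := P₁.inv (P₂.φ z)

def transferDomain : Set ℂ := P₂.box ∩ P₂.φ ⁻¹' (P₁.φ '' P₁.regularPoints)

noncomputable def pullbackDensity : ℂ → ℝ≥0∞ :=
  (transferDomain P₁ P₂).indicator fun z => ‖deriv (transfer P₁ P₂) z‖ₑ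

theorem isOpen_transferDomain : IsOpen (transferDomain P₁ P₂) :=
  P₂.holo.continuousOn.isOpen_inter_preimage P₂.isOpen_box P₁.isOpen_image_regularPoints

theorem measurable_pullbackDensity : Measurable (pullbackDensity P₁ P₂) :=
  (measurable_deriv _).enorm.indicator (isOpen_transferDomain P₁ P₂).measurableSet

variable {P₁ P₂}

theorem transfer_eq {v w : ℂ} (hw : w ∈ P₁.box) (h : P₂.φ v = P₁.φ w) :
    transfer P₁ P₂ v = w := by
  rw [transfer, h, P₁.inv_φ hw]

theorem transfer_mem_box {z : ℂ} (hz : z ∈ transferDomain P₁ P₂) :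
    transfer P₁ P₂ z ∈ P₁.box := by
  obtain ⟨w, hw, hwz⟩ := hz.2
  rw [transfer_eq hw.1 hwz.symm]
  exact hw.1

theorem φ_transfer {z : ℂ} (hz : z ∈ transferDomain P₁ P₂) :
    P₁.φ (transfer P₁ P₂ z) = P₂.φ z := by
  obtain ⟨w, hw, hwz⟩ := hz.2
  rw [transfer_eq hw.1 hwz.symm, hwz]

theorem injOn_transfer : InjOn (transfer P₁ P₂) (transferDomain P₁ P₂) := fun _ ha _ hb hab =>
  P₂.injOn ha.1 hb.1 (by rw [← φ_transfer ha, ← φ_transfer hb, hab])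

theorem hasDerivAt_transfer {z : ℂ} (hz : z ∈ transferDomain P₁ P₂) :
    HasDerivAt (transfer P₁ P₂) (deriv (transfer P₁ P₂) z) z := by
  obtain ⟨w, hw, hwz⟩ := hz.2
  have hinv := P₁.hasStrictDerivAt_inv hw
  rw [hwz] at hinv
  have hφ₂ := (P₂.holo.differentiableAt (P₂.isOpen_box.mem_nhds hz.1)).hasDerivAt
  exact (hinv.hasDerivAt.comp z hφ₂).differentiableAt.hasDerivAt

theorem lintegral_pullbackDensity_sq_le :
    ∫⁻ z, pullbackDensity P₁ P₂ z ^ 2 ≤ ENNReal.ofReal P₁.m := by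
  have hD := (isOpen_transferDomain P₁ P₂).measurableSet
  calc ∫⁻ z, pullbackDensity P₁ P₂ z ^ 2
      = ∫⁻ z in transferDomain P₁ P₂, ‖deriv (transfer P₁ P₂) z‖ₑ ^ 2 := by
        rw [← lintegral_indicator hD]
        congr 1 with z
        by_cases hz : z ∈ transferDomain P₁ P₂ <;> simp [pullbackDensity, hz]
    _ = volume (transfer P₁ P₂ '' transferDomain P₁ P₂) :=
        lintegral_enorm_deriv_sq_eq_volume_image hD
          (fun _ hz => (hasDerivAt_transfer hz).hasDerivWithinAt) injOn_transfer
    _ ≤ volume P₁.box := measure_mono (image_subset_iff.2 fun _ => transfer_mem_box)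
    _ = ENNReal.ofReal P₁.m := P₁.volume_box

theorem ofReal_m_le_lintegral_pullbackDensity {s : ℝ} (hs : s ∈ Ioo 0 P₂.m)
    (hcross : ∀ t ∈ Ioo 0 P₁.m, (P₁.leaf t ∩ P₂.leaf s).Nonempty) :
    ENNReal.ofReal P₁.m ≤ ∫⁻ y in Ioo (0 : ℝ) 1, pullbackDensity P₁ P₂ (s + y * I) := by
  set L : ℝ → ℂ := fun y => s + y * I
  set A := Ioo 0 1 ∩ L ⁻¹' transferDomain P₁ P₂
  have hA : MeasurableSet A := measurableSet_Ioo.inter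
    ((isOpen_transferDomain P₁ P₂).measurableSet.preimage (by fun_prop))
  have hderiv (y : ℝ) (hy : y ∈ A) : HasDerivWithinAt (fun y => transfer P₁ P₂ (L y))
      (deriv (transfer P₁ P₂) (L y) * I) A y := by
    have hL : HasDerivAt L I y := by
      simpa only [ofReal_one, one_mul] using
        ((hasDerivAt_id' y).ofReal_comp.mul_const I).const_add (s : ℂ)
    exact ((hasDerivAt_transfer hy.2).comp y hL).hasDerivWithinAt
  have hcover :
      Ioo 0 P₁.m \ re '' P₁.criticalPoints ⊆ (fun y => (transfer P₁ P₂ (L y)).re) '' A := by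
    rintro t ⟨ht, htc⟩
    obtain ⟨_, ⟨w, ⟨hwre, hwim⟩, rfl⟩, ⟨v, ⟨hvre, hvim⟩, hvw⟩⟩ := hcross t ht
    have hw : w ∈ P₁.box := mem_reProdIm.2 ⟨hwre ▸ ht, hwim⟩
    have hLv : L v.im = v := by apply Complex.ext <;> simp [L, hvre]
    refine ⟨v.im, ⟨hvim, ?_⟩, ?_⟩
    · rw [mem_preimage, hLv]
      have hwreg : w ∈ P₁.regularPoints := ⟨hw, fun h => htc ⟨w, ⟨h, hw⟩, hwre⟩⟩
      exact ⟨mem_reProdIm.2 ⟨hvre ▸ hs, hvim⟩, w, hwreg, hvw.symm⟩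
    · show (transfer P₁ P₂ (L v.im)).re = t
      rw [hLv, transfer_eq hw hvw, hwre]
  calc ENNReal.ofReal P₁.m = volume (Ioo 0 P₁.m \ re '' P₁.criticalPoints) := by
        rw [measure_sdiff_null ((P₁.countable_criticalPoints.image re).measure_zero _),
          Real.volume_Ioo, sub_zero]
    _ ≤ volume ((fun y => (transfer P₁ P₂ (L y)).re) '' A) := measure_mono hcover
    _ ≤ ∫⁻ y in A, ‖deriv (transfer P₁ P₂) (L y) * I‖ₑ :=
        volume_re_image_le_lintegral_enorm hA hderiv
    _ = ∫⁻ y in A, pullbackDensity P₁ P₂ (L y) := setLIntegral_congr_fun hA fun y hy => by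
        have hI : ‖I‖ₑ = 1 := by simp [enorm_eq_nnnorm]
        rw [pullbackDensity, indicator_of_mem (mem_preimage.1 hy.2), enorm_mul, hI, mul_one]
    _ ≤ ∫⁻ y in Ioo 0 1, pullbackDensity P₁ P₂ (L y) := lintegral_mono_set inter_subset_left

def Crosses (P₁ P₂ : ConformalRectangle) : Prop :=
  ∀ t₁ ∈ Ioo 0 P₁.m, ∀ t₂ ∈ Ioo 0 P₂.m, (P₁.leaf t₁ ∩ P₂.leaf t₂).Nonempty

theorem Crosses.mul_m_le_one (h : Crosses P₁ P₂) : P₁.m * P₂.m ≤ 1 := by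
  have hlengthArea := ofReal_mul_sq_le_lintegral_sq (measurable_pullbackDensity P₁ P₂)
    fun s hs => ofReal_m_le_lintegral_pullbackDensity hs fun t ht => h t ht s hs
  have := hlengthArea.trans lintegral_pullbackDensity_sq_le
  rw [← ENNReal.ofReal_pow P₁.m_pos.le, ← ENNReal.ofReal_mul P₂.m_pos.le,
    ENNReal.ofReal_le_ofReal_iff P₁.m_pos.le] at this
  nlinarith [P₁.m_pos]

end ConformalRectangle

/-- **Non-Crossing Principle.** If two conformal rectangles each have extremal width
strictly greater than `1`, then they do not cross: there exist vertical leaves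
`γ₁` of `P₁` and `γ₂` of `P₂` that are disjoint. -/
theorem non_crossing_principle (P₁ P₂ : ConformalRectangle)
    (h₁ : 1 < P₁.m) (h₂ : 1 < P₂.m) :
    ∃ t₁ ∈ Set.Ioo 0 P₁.m, ∃ t₂ ∈ Set.Ioo 0 P₂.m,
      Disjoint (P₁.leaf t₁) (P₂.leaf t₂) := by
  by_contra h
  have hcross : P₁.Crosses P₂ := by
    simpa [ConformalRectangle.Crosses, not_disjoint_iff_nonempty_inter] using h
  nlinarith [hcross.mul_m_le_one]
end
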